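/- Let A be a real symmetric n×n matrix (viewed as a complex matrix) and let P and Q be density matrices. If there is pretty good state transfer from P to Q, then the unital complex subalgebra of n×n matrices generated by A and P equals the unital complex subalgebra generated by A and Q (i.e. Algebra.adjoin ℂ {A, P} = Algebra.adjoin ℂ {A, Q}). -/

import Mathlib

/-!
Conjugation by `U(t) = exp(itA)` maps every subalgebra containing `A` and `P` into itself, since
such a subalgebra contains `U(±t)`. Being finite-dimensional, the subalgebra is closed, so it also
contains `Q`, a limit of conjugates of `P`. For Hermitian `A` the matrices `U(t)` are unitary, and
conjugation by a unitary is an isometry for the Frobenius norm, whence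
`‖U(t) P U(-t) - Q‖ = ‖U(-t) Q U(t) - P‖`: transfer from `P` to `Q` gives transfer from `Q` to
`P`, and the argument runs in both directions.
-/

open Matrix
open scoped ComplexOrder

/-- The transition matrix `U(t) = exp(itA)`. -/
noncomputable def U {n : ℕ} (A : Matrix (Fin n) (Fin n) ℂ) (t : ℝ) :
    Matrix (Fin n) (Fin n) ℂ :=
  NormedSpace.exp (((t : ℂ) * Complex.I) • A)

/-- The Frobenius norm of a complex matrix. -/
noncomputable def fnorm {n : ℕ} (M : Matrix (Fin n) (Fin n) ℂ) : ℝ :=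
  Real.sqrt (∑ i, ∑ j, ‖M i j‖ ^ 2)

attribute [local instance] Matrix.frobeniusNormedAddCommGroup

section Frobenius

variable {𝕜 m n : Type*} [RCLike 𝕜] [Fintype m] [Fintype n]

theorem Matrix.frobenius_norm_eq_sqrt (M : Matrix m n 𝕜) :
    ‖M‖ = √(∑ i, ∑ j, ‖M i j‖ ^ 2) := by
  simp only [frobenius_norm_def, Real.sqrt_eq_rpow, Real.rpow_two]

theorem Matrix.frobenius_norm_sq_eq_trace (M : Matrix m n 𝕜) :
    ((‖M‖ ^ 2 : ℝ) : 𝕜) = trace (Mᴴ * M) := by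
  rw [frobenius_norm_eq_sqrt, Real.sq_sqrt (by positivity), Finset.sum_comm]
  simp [trace, mul_apply, RCLike.conj_mul]

theorem Matrix.frobenius_norm_unitary_mul [DecidableEq m] {W : Matrix m m 𝕜}
    (hW : W ∈ unitary (Matrix m m 𝕜)) (X : Matrix m n 𝕜) : ‖W * X‖ = ‖X‖ := by
  have hsq : ((‖W * X‖ ^ 2 : ℝ) : 𝕜) = ((‖X‖ ^ 2 : ℝ) : 𝕜) := by
    rw [frobenius_norm_sq_eq_trace, frobenius_norm_sq_eq_trace, conjTranspose_mul,
      Matrix.mul_assoc, ← Matrix.mul_assoc Wᴴ, ← star_eq_conjTranspose,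
      Unitary.star_mul_self_of_mem hW, Matrix.one_mul]
  exact (sq_eq_sq₀ (norm_nonneg _) (norm_nonneg _)).mp (RCLike.ofReal_injective hsq)

theorem Matrix.frobenius_norm_mul_unitary [DecidableEq n] {W : Matrix n n 𝕜}
    (hW : W ∈ unitary (Matrix n n 𝕜)) (X : Matrix m n 𝕜) : ‖X * W‖ = ‖X‖ := by
  rw [← frobenius_norm_conjTranspose, conjTranspose_mul, ← star_eq_conjTranspose W,
    frobenius_norm_unitary_mul (Unitary.star_mem hW), frobenius_norm_conjTranspose]

end Frobenius

theorem Matrix.isHermitian_of_im_eq_zero_of_transpose_eq {m : Type*} {A : Matrix m m ℂ}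
    (hreal : ∀ i j, (A i j).im = 0) (hsym : Aᵀ = A) : A.IsHermitian := by
  ext i j
  rw [conjTranspose_apply, Complex.star_def, Complex.conj_eq_iff_im.mpr (hreal j i)]
  exact congrFun (congrFun hsym i) j

section Transfer

variable {n : ℕ} {A : Matrix (Fin n) (Fin n) ℂ}

theorem fnorm_eq_norm (M : Matrix (Fin n) (Fin n) ℂ) : fnorm M = ‖M‖ :=
  (frobenius_norm_eq_sqrt M).symm

theorem U_add (A : Matrix (Fin n) (Fin n) ℂ) (s t : ℝ) : U A (s + t) = U A s * U A t := by
  rw [U, U, U, ← Matrix.exp_add_of_commute _ _ (((Commute.refl A).smul_left _).smul_right _),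
    ← add_smul]
  push_cast
  ring_nf

theorem U_zero (A : Matrix (Fin n) (Fin n) ℂ) : U A 0 = 1 := by
  simp [U]

theorem U_neg (hA : A.IsHermitian) (t : ℝ) : U A (-t) = star (U A t) := by
  rw [U, U, star_eq_conjTranspose, ← Matrix.exp_conjTranspose, conjTranspose_smul, hA.eq]
  congr 2
  simp

theorem U_mem_unitary (hA : A.IsHermitian) (t : ℝ) :
    U A t ∈ unitary (Matrix (Fin n) (Fin n) ℂ) := by
  rw [Unitary.mem_iff, ← U_neg hA, ← U_add, ← U_add, neg_add_cancel, add_neg_cancel, U_zero,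
    and_self]

theorem isClosed_subalgebra (S : Subalgebra ℂ (Matrix (Fin n) (Fin n) ℂ)) :
    IsClosed (S : Set (Matrix (Fin n) (Fin n) ℂ)) :=
  (Subalgebra.toSubmodule S).closed_of_finiteDimensional

theorem U_mem {S : Subalgebra ℂ (Matrix (Fin n) (Fin n) ℂ)} (hA : A ∈ S) (t : ℝ) : U A t ∈ S :=
  NormedSpace.exp_mem (isClosed_subalgebra S) (S.smul_mem hA _)

def PrettyGoodStateTransfer (A P Q : Matrix (Fin n) (Fin n) ℂ) : Prop :=
  ∀ ε : ℝ, 0 < ε → ∃ t : ℝ, fnorm (U A t * P * U A (-t) - Q) < ε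

variable {P Q : Matrix (Fin n) (Fin n) ℂ}

theorem PrettyGoodStateTransfer.symm (hA : A.IsHermitian) (h : PrettyGoodStateTransfer A P Q) :
    PrettyGoodStateTransfer A Q P := by
  intro ε hε
  obtain ⟨t, ht⟩ := h ε hε
  refine ⟨-t, ?_⟩
  have hinv : U A (-t) * U A t = 1 := by rw [← U_add, neg_add_cancel, U_zero]
  have hconj : U A (-t) * Q * U A (- -t) - P =
      U A (-t) * (Q - U A t * P * U A (-t)) * U A t := by
    simp only [neg_neg, Matrix.mul_sub, Matrix.sub_mul, Matrix.mul_assoc, hinv, Matrix.mul_one]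
    rw [← Matrix.mul_assoc (U A (-t)) (U A t), hinv, Matrix.one_mul]
  rwa [fnorm_eq_norm, hconj, frobenius_norm_mul_unitary (U_mem_unitary hA t),
    frobenius_norm_unitary_mul (U_mem_unitary hA (-t)), norm_sub_rev, ← fnorm_eq_norm]

theorem PrettyGoodStateTransfer.mem_closure (h : PrettyGoodStateTransfer A P Q) :
    Q ∈ closure (Set.range fun t => U A t * P * U A (-t)) :=
  Metric.mem_closure_range_iff.mpr fun ε hε => (h ε hε).imp fun t ht => by
    rwa [dist_comm, dist_eq_norm, ← fnorm_eq_norm]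

theorem PrettyGoodStateTransfer.mem {S : Subalgebra ℂ (Matrix (Fin n) (Fin n) ℂ)}
    (h : PrettyGoodStateTransfer A P Q) (hA : A ∈ S) (hP : P ∈ S) : Q ∈ S := by
  refine (isClosed_subalgebra S).closure_subset_iff.mpr ?_ h.mem_closure
  rintro _ ⟨t, rfl⟩
  exact S.mul_mem (S.mul_mem (U_mem hA t) hP) (U_mem hA (-t))

theorem PrettyGoodStateTransfer.adjoin_le (h : PrettyGoodStateTransfer A P Q) :
    Algebra.adjoin ℂ {A, Q} ≤ Algebra.adjoin ℂ ({A, P} : Set (Matrix (Fin n) (Fin n) ℂ)) := by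
  refine Algebra.adjoin_le (Set.insert_subset_iff.mpr ⟨Algebra.subset_adjoin (by simp), ?_⟩)
  exact Set.singleton_subset_iff.mpr
    (h.mem (Algebra.subset_adjoin (by simp)) (Algebra.subset_adjoin (by simp)))

end Transfer

theorem stmt_7_general {n : ℕ}
    (A : Matrix (Fin n) (Fin n) ℂ)
    (hAreal : ∀ i j, (A i j).im = 0) (hAsym : Aᵀ = A)
    (P Q : Matrix (Fin n) (Fin n) ℂ)
    (hpgst : ∀ ε : ℝ, 0 < ε → ∃ t : ℝ, fnorm (U A t * P * U A (-t) - Q) < ε) :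
    Algebra.adjoin ℂ ({A, P} : Set (Matrix (Fin n) (Fin n) ℂ)) =
      Algebra.adjoin ℂ ({A, Q} : Set (Matrix (Fin n) (Fin n) ℂ)) := by
  have hA : A.IsHermitian := isHermitian_of_im_eq_zero_of_transpose_eq hAreal hAsym
  have h : PrettyGoodStateTransfer A P Q := hpgst
  exact le_antisymm (h.symm hA).adjoin_le h.adjoin_le

/-- If `A` is real symmetric and there is pretty good state
transfer from the density matrix `P` to the density matrix `Q`, then the unital
complex algebra generated by `A` and `P` equals that generated by `A` and `Q`. -/
theorem stmt_7 {n : ℕ} (hn : 1 ≤ n)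
    (A : Matrix (Fin n) (Fin n) ℂ)
    (hAreal : ∀ i j, (A i j).im = 0) (hAsym : Aᵀ = A)
    (P Q : Matrix (Fin n) (Fin n) ℂ)
    (hP : P.PosSemidef) (hPtr : P.trace = 1)
    (hQ : Q.PosSemidef) (hQtr : Q.trace = 1)
    (hpgst : ∀ ε : ℝ, 0 < ε → ∃ t : ℝ, fnorm (U A t * P * U A (-t) - Q) < ε) :
    Algebra.adjoin ℂ ({A, P} : Set (Matrix (Fin n) (Fin n) ℂ)) =
      Algebra.adjoin ℂ ({A, Q} : Set (Matrix (Fin n) (Fin n) ℂ)) :=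
  stmt_7_general A hAreal hAsym P Q hpgst
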